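/- Let m, n₁, n₂, p be positive integers, let l : Fin m → Fin p be a map, and let V₁ and V₂ be m×n₁ and m×n₂ complex matrices. For r ∈ ℂ^p, let D_r denote the m×m diagonal matrix whose t-th diagonal entry is r(l(t)). Then for almost every (r, s) ∈ ℂ^p × ℂ^p, the rank of the m×(n₁+n₂) block matrix [D_r V₁ D_s V₂] is greater than or equal to the rank of the block matrix [V₁ V₂]. -/

import Mathlib

/-!
Let `k` be the rank of `[V₁ V₂]` and fix a nonzero `k × k` minor of it. The same minor of
`[D_r V₁ D_s V₂]` is a polynomial in `(r, s)` which is nonzero at `r = s = 1`, hence is not the zero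
polynomial. A nonzero polynomial on `Kⁿ` vanishes only on a null set of any product of atomless
σ-finite measures: by induction on the number of variables, Fubini reduces to the leading coefficient
in the last variable and to the finiteness of the roots of a nonzero univariate polynomial.
Off that null set the minor survives, so the rank cannot drop.
-/

open Matrix MeasureTheory

/-- The `m × m` diagonal matrix whose `t`-th diagonal entry is `r (l t)`. -/
def patDiag {m p : ℕ} (l : Fin m → Fin p) (r : Fin p → ℂ) :
    Matrix (Fin m) (Fin m) ℂ :=
  Matrix.diagonal (r ∘ l)

namespace Matrix

theorem le_rank_of_submatrix_det_ne_zero {R : Type*} [CommRing R] [IsDomain R]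
    {m n : Type*} [Fintype n] {k : ℕ} (A : Matrix m n R) {α : Fin k → m} {β : Fin k → n}
    (h : (A.submatrix α β).det ≠ 0) : k ≤ A.rank := by
  simpa [rank_of_det_ne_zero h] using A.rank_submatrix_le α β

variable {K : Type*} [Field K] {m n : Type*} [Fintype m] [Fintype n]

theorem exists_linearIndependent_cols (A : Matrix m n K) :
    ∃ β : Fin A.rank → n, LinearIndependent K (A.submatrix id β).col := by
  obtain ⟨κ, a, -, hspan, hli⟩ := exists_linearIndependent' K A.col
  have := hli.finite
  have := Fintype.ofFinite κ
  have hcard : Fintype.card κ = A.rank := by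
    rw [linearIndependent_iff_card_eq_finrank_span.1 hli, Set.finrank, hspan,
      rank_eq_finrank_span_cols]
  let e : Fin A.rank ≃ κ := (Fintype.equivFinOfCardEq hcard).symm
  exact ⟨a ∘ e, hli.comp e e.injective⟩

theorem exists_submatrix_det_ne_zero (A : Matrix m n K) :
    ∃ (α : Fin A.rank → m) (β : Fin A.rank → n), (A.submatrix α β).det ≠ 0 := by
  obtain ⟨β, hβ⟩ := A.exists_linearIndependent_cols
  have hrank : (A.submatrix id β)ᵀ.rank = A.rank := by
    simpa using LinearIndependent.rank_matrix (M := (A.submatrix id β)ᵀ) hβ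
  obtain ⟨α, hα⟩ := hrank ▸ (A.submatrix id β)ᵀ.exists_linearIndependent_cols
  exact ⟨α, β, ((isUnit_iff_isUnit_det _).1 (linearIndependent_rows_iff_isUnit.1 hα)).ne_zero⟩

end Matrix

section NullZeroLocus

variable {K : Type*} [Field K] [MeasurableSpace K] (μ : Measure K)

theorem Polynomial.ae_eval_ne_zero [NullSingletonClass μ] {f : Polynomial K} (hf : f ≠ 0) :
    ∀ᵐ y ∂μ, f.eval y ≠ 0 :=
  ae_iff.2 <| by simpa using (Polynomial.finite_setOfPred_isRoot hf).measure_zero μ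

namespace MvPolynomial

variable [SigmaFinite μ]

theorem ae_eval_ne_zero_of_equiv {α β : Type*} [Fintype α] [Fintype β] (e : α ≃ β)
    (h : ∀ q : MvPolynomial α K, q ≠ 0 → ∀ᵐ x ∂Measure.pi fun _ : α => μ, eval x q ≠ 0)
    (q : MvPolynomial β K) (hq : q ≠ 0) :
    ∀ᵐ x ∂Measure.pi fun _ : β => μ, eval x q ≠ 0 := by
  rw [← (measurePreserving_piCongrLeft (fun _ => μ) e).map_eq,
    (MeasurableEquiv.piCongrLeft _ e).measurableEmbedding.ae_map_iff]
  have hq' : rename e.symm q ≠ 0 := (map_ne_zero_iff _ (rename_injective _ e.symm.injective)).2 hq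
  have hcongr (x : α → K) : MeasurableEquiv.piCongrLeft (fun _ => K) e x = x ∘ e.symm := by
    ext b
    simp [MeasurableEquiv.coe_piCongrLeft, Equiv.piCongrLeft_apply]
  filter_upwards [h _ hq'] with x hx
  rwa [eval_rename, ← hcongr] at hx

variable [TopologicalSpace K] [IsTopologicalRing K] [T2Space K] [SecondCountableTopology K]
  [BorelSpace K] [NullSingletonClass μ]

theorem ae_eval_ne_zero_option {σ : Type*} [Fintype σ]
    (ih : ∀ q : MvPolynomial σ K, q ≠ 0 → ∀ᵐ x ∂Measure.pi fun _ : σ => μ, eval x q ≠ 0)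
    (q : MvPolynomial (Option σ) K) (hq : q ≠ 0) :
    ∀ᵐ x ∂Measure.pi fun _ : Option σ => μ, eval x q ≠ 0 := by
  let e := (MeasurableEquiv.piOptionEquivProd fun _ : Option σ => K).symm
  have he (z : (σ → K) × K) : e z = fun i => Option.elim i z.2 z.1 := by
    funext i
    cases i <;> rfl
  rw [← Measure.pi_map_piOptionEquivProd, e.measurableEmbedding.ae_map_iff]
  simp only [he]
  have hcont : Continuous fun z : (σ → K) × K => eval (fun i => Option.elim i z.2 z.1) q :=
    (continuous_eval q).comp (continuous_pi fun i => by
      cases i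
      exacts [continuous_snd, (continuous_apply _).comp continuous_fst])
  refine (Measure.ae_prod_iff_ae_ae
    (isClosed_eq hcont continuous_const).isOpen_compl.measurableSet).2 ?_
  have hq' : optionEquivLeft K σ q ≠ 0 :=
    (map_ne_zero_iff _ (optionEquivLeft K σ).injective).2 hq
  filter_upwards [ih _ (Polynomial.leadingCoeff_ne_zero.2 hq')] with s hs
  have hmap : (optionEquivLeft K σ q).map (eval s) ≠ 0 := fun h => hs <| by
    rw [Polynomial.leadingCoeff, ← Polynomial.coeff_map, h, Polynomial.coeff_zero]
  simpa only [optionEquivLeft_elim_eval] using Polynomial.ae_eval_ne_zero μ hmap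

theorem ae_eval_ne_zero {σ : Type*} [Fintype σ] {q : MvPolynomial σ K} (hq : q ≠ 0) :
    ∀ᵐ x ∂Measure.pi fun _ : σ => μ, eval x q ≠ 0 := by
  refine Finite.induction_empty_option (P := fun σ => ∀ [Fintype σ] (q : MvPolynomial σ K),
    q ≠ 0 → ∀ᵐ x ∂Measure.pi fun _ : σ => μ, eval x q ≠ 0) ?_ ?_ ?_ σ q hq
  · intro α β e h _
    have := Fintype.ofEquiv β e.symm
    exact ae_eval_ne_zero_of_equiv μ e h
  · intro _ q hq
    obtain ⟨c, rfl⟩ := C_surjective PEmpty q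
    exact ae_of_all _ fun x => by simpa using hq
  · intro α _ h _
    convert ae_eval_ne_zero_option μ h

theorem _root_.Matrix.ae_rank_le_rank_map_eval {m n σ : Type*} [Fintype m] [Fintype n]
    [Fintype σ] (P : Matrix m n (MvPolynomial σ K)) (x₀ : σ → K) :
    ∀ᵐ x ∂Measure.pi fun _ : σ => μ, (P.map (eval x₀)).rank ≤ (P.map (eval x)).rank := by
  obtain ⟨α, β, hminor⟩ := (P.map (eval x₀)).exists_submatrix_det_ne_zero
  have heval (x : σ → K) : eval x (P.submatrix α β).det =
      ((P.map (eval x)).submatrix α β).det := by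
    rw [RingHom.map_det, RingHom.mapMatrix_apply, submatrix_map]
  have hq : (P.submatrix α β).det ≠ 0 := fun h => hminor (by rw [← heval, h, map_zero])
  filter_upwards [ae_eval_ne_zero μ hq] with x hx
  exact le_rank_of_submatrix_det_ne_zero _ (heval x ▸ hx)

end MvPolynomial

end NullZeroLocus

/-- `[D_r V₁ D_s V₂]` with the indeterminate `X (Sum.inl i)` in place of `r i` and
`X (Sum.inr i)` in place of `s i`. -/
noncomputable def patScaledFromColsPoly {m n₁ n₂ p : ℕ} (l : Fin m → Fin p)
    (V₁ : Matrix (Fin m) (Fin n₁) ℂ) (V₂ : Matrix (Fin m) (Fin n₂) ℂ) :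
    Matrix (Fin m) (Fin n₁ ⊕ Fin n₂) (MvPolynomial (Fin p ⊕ Fin p) ℂ) :=
  fromCols (of fun t j => .X (.inl (l t)) * .C (V₁ t j))
    (of fun t j => .X (.inr (l t)) * .C (V₂ t j))

theorem map_eval_patScaledFromColsPoly {m n₁ n₂ p : ℕ} (l : Fin m → Fin p)
    (V₁ : Matrix (Fin m) (Fin n₁) ℂ) (V₂ : Matrix (Fin m) (Fin n₂) ℂ) (x : Fin p ⊕ Fin p → ℂ) :
    (patScaledFromColsPoly l V₁ V₂).map (MvPolynomial.eval x) =
      fromCols (patDiag l (x ∘ Sum.inl) * V₁) (patDiag l (x ∘ Sum.inr) * V₂) := by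
  ext i (j | j) <;> simp [patScaledFromColsPoly, patDiag, diagonal_mul]

theorem patDiag_one {m p : ℕ} (l : Fin m → Fin p) : patDiag l 1 = 1 :=
  diagonal_one

theorem stmt9_general (m n₁ n₂ p : ℕ)
    (l : Fin m → Fin p)
    (V₁ : Matrix (Fin m) (Fin n₁) ℂ) (V₂ : Matrix (Fin m) (Fin n₂) ℂ) :
    ∀ᵐ rs : (Fin p → ℂ) × (Fin p → ℂ),
      (Matrix.fromCols (patDiag l rs.1 * V₁) (patDiag l rs.2 * V₂)).rank ≥
        (Matrix.fromCols V₁ V₂).rank := by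
  have h := (patScaledFromColsPoly l V₁ V₂).ae_rank_le_rank_map_eval volume 1
  simp only [map_eval_patScaledFromColsPoly, Pi.one_comp, patDiag_one, Matrix.one_mul] at h
  exact (volume_measurePreserving_sumPiEquivProdPi_symm fun _ => ℂ).quasiMeasurePreserving.ae h

theorem stmt9 (m n₁ n₂ p : ℕ) (hm : 0 < m) (hn₁ : 0 < n₁) (hn₂ : 0 < n₂) (hp : 0 < p)
    (l : Fin m → Fin p)
    (V₁ : Matrix (Fin m) (Fin n₁) ℂ) (V₂ : Matrix (Fin m) (Fin n₂) ℂ) :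
    ∀ᵐ rs : (Fin p → ℂ) × (Fin p → ℂ),
      (Matrix.fromCols (patDiag l rs.1 * V₁) (patDiag l rs.2 * V₂)).rank ≥
        (Matrix.fromCols V₁ V₂).rank :=
  stmt9_general m n₁ n₂ p l V₁ V₂
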